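/- For any two response objects o1 and o2 and any configuration c, the resolve complexity of merge(o1, o2) is at most rcx(o1, c) + rcx(o2, c), where merge recursively merges fields and collapses fields with the same label into one. -/

import Mathlib

/-! Response objects, recursive merge, and resolve complexity. -/

/-- Response objects: scalar values, finite maps from labels to responses,
or finite lists of responses. -/
inductive Obj where
  | scalar : String → Obj
  | obj : List (String × Obj) → Obj
  | arr : List Obj → Obj

mutual
/-- Recursive merge of two responses: union of labels, recursively merging
values on common labels. -/
def merge : Obj → Obj → Obj
  | .obj fs, .obj fs2 => .obj (mergeFields fs fs2)
  | o, _ => o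
def mergeFields : List (String × Obj) → List (String × Obj) → List (String × Obj)
  | [], fs2 => fs2
  | (l, v) :: fs, fs2 =>
    match fs2.find? (fun p => p.1 == l) with
    | some p2 => (l, merge v p2.2) :: mergeFields fs (fs2.eraseP (fun p => p.1 == l))
    | none => (l, v) :: mergeFields fs fs2
end

mutual
/-- Resolve complexity: sum of the weight of every field occurrence. -/
def rcx (w : String → ℕ) : Obj → ℕ
  | .scalar _ => 0
  | .obj fs => rcxF w fs
  | .arr os => rcxL w os
def rcxF (w : String → ℕ) : List (String × Obj) → ℕ
  | [] => 0
  | (l, v) :: fs => w l + rcx w v + rcxF w fs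
def rcxL (w : String → ℕ) : List Obj → ℕ
  | [] => 0
  | o :: os => rcx w o + rcxL w os
end

mutual
/-- Number of field occurrences in a response. -/
def fieldCount : Obj → ℕ
  | .scalar _ => 0
  | .obj fs => fieldCountF fs
  | .arr os => fieldCountL os
def fieldCountF : List (String × Obj) → ℕ
  | [] => 0
  | (_, v) :: fs => 1 + fieldCount v + fieldCountF fs
def fieldCountL : List Obj → ℕ
  | [] => 0
  | o :: os => fieldCount o + fieldCountL os
end

/-- Top-level labels of a response object. -/
def labels : Obj → List String
  | .obj fs => fs.map Prod.fst
  | _ => []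

/-! Merging keeps every field of the first object; a field of the second object is either
kept as well or, when its label already occurs, erased and merged into the field with that
label. Erasing a field removes exactly its weight from `rcxF`, so by induction on the nesting
depth the merged object costs at most the two summands, the shared label now being paid once. -/

theorem rcxF_append (w : String → ℕ) (fs gs : List (String × Obj)) :
    rcxF w (fs ++ gs) = rcxF w fs + rcxF w gs := by
  induction fs with
  | nil => simp [rcxF]
  | cons f fs ih => simp only [List.cons_append, rcxF, ih]; omega

theorem rcxF_eraseP_add {w : String → ℕ} {q : String × Obj → Bool} {fs : List (String × Obj)}
    {f : String × Obj} (h : fs.find? q = some f) :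
    rcxF w (fs.eraseP q) + (w f.1 + rcx w f.2) = rcxF w fs := by
  obtain ⟨hf, pre, post, rfl, hpre⟩ := List.find?_eq_some_iff_append.1 h
  rw [List.eraseP_append_right _ fun g hg => by simpa using hpre g hg,
    List.eraseP_cons_of_pos hf, rcxF_append, rcxF_append, rcxF]
  omega

theorem rcxF_mergeFields_le (w : String → ℕ) (fs gs : List (String × Obj))
    (hmerge : ∀ f ∈ fs, ∀ o, rcx w (merge f.2 o) ≤ rcx w f.2 + rcx w o) :
    rcxF w (mergeFields fs gs) ≤ rcxF w fs + rcxF w gs := by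
  induction fs generalizing gs with
  | nil => simp [mergeFields, rcxF]
  | cons f fs ih =>
    obtain ⟨l, v⟩ := f
    have ih' gs := ih gs fun f hf => hmerge f (List.mem_cons_of_mem _ hf)
    rw [mergeFields]
    cases hfind : gs.find? (fun g => g.1 == l) with
    | none =>
      simp only [rcxF]
      have := ih' gs
      omega
    | some g =>
      simp only [rcxF]
      have hlabel : g.1 = l := by simpa using List.find?_some hfind
      have hv : rcx w (merge v g.2) ≤ rcx w v + rcx w g.2 :=
        hmerge (l, v) List.mem_cons_self g.2
      have hrest := ih' (gs.eraseP fun g => g.1 == l)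
      have herase := rcxF_eraseP_add (w := w) hfind
      rw [hlabel] at herase
      omega

/-- **Merge subadditivity.** For any two response objects `o1`, `o2` and any
(non-negative) weight configuration `w`, the resolve complexity of
`merge o1 o2` is at most `rcx o1 + rcx o2`. -/
theorem rcx_merge_le (w : String → ℕ) (o1 o2 : Obj) :
    rcx w (merge o1 o2) ≤ rcx w o1 + rcx w o2 :=
  match o1, o2 with
  | .obj fs, .obj gs =>
    rcxF_mergeFields_le w fs gs fun f _ o => rcx_merge_le w f.2 o
  | .obj _, .scalar _ | .obj _, .arr _ | .scalar _, _ | .arr _, _ => Nat.le_add_right _ _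
termination_by o1
decreasing_by
  have := List.sizeOf_lt_of_mem ‹f ∈ fs›
  cases f
  simp only [Prod.mk.sizeOf_spec, Obj.obj.sizeOf_spec] at this ⊢
  omega
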